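/- arXiv:1107.4392 — 2 statements merged into one kernel-verified Lean document; each statement's English description precedes it below -/
import Mathlib

section
/- Let G be a finite abelian group and let m be the largest cardinality of a proper subgroup of G. Let A_1, ..., A_j be multisets in G and A = A_1 ∪ ... ∪ A_j (multiset union). Then either ΣA = G or #ΣA ≥ (Σ_{i=1}^j #ΣA_i) − (j−1)m. -/
/-- The sumset ΣA of a multiset A: all sums of submultisets of A (including the empty sum 0). -/
def sumset {G : Type*} [AddCommMonoid G] (A : Multiset G) : Set G :=
  {x | ∃ B ≤ A, B.sum = x}

/-!
Two nonempty finite sets `s`, `t` satisfy `#s + #t ≤ #(s + t) + m` unless `s + t` is everything.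
Induct on `t`: if some `e = x - y` with `x ∈ s`, `y ∈ t` has `e + t ⊄ s`, the Dyson `e`-transform
strictly shrinks `t` (keeping `y`), preserves `#s + #t` and does not enlarge `s + t`. Otherwise
`t - t` lies in the stabilizer of `s`; that is a proper subgroup (so `#t ≤ m`) unless `s` is the
whole group. Since `Σ(A + B) = ΣA + ΣB` and every `ΣA` contains `0`, the theorem follows by
adding the multisets one at a time.
-/

open Pointwise Finset AddAction

namespace Finset

variable {G : Type*} [AddCommGroup G] [DecidableEq G] {s t : Finset G}

lemma sub_subset_stabilizer_of_forall_vadd_subset (h : ∀ x ∈ s, ∀ y ∈ t, (x - y) +ᵥ t ⊆ s) :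
    ((t - t : Finset G) : Set G) ⊆ stabilizer G s := by
  intro d hd
  obtain ⟨b, hb, y, hy, rfl⟩ := mem_sub.1 (mem_coe.1 hd)
  refine mem_stabilizer_finset'.2 fun x hx ↦ ?_
  have : (b - y) +ᵥ x = (x - y) +ᵥ b := by simp only [vadd_eq_add]; abel
  exact this ▸ h x hx y hy (vadd_mem_vadd_finset hb)

lemma card_le_card_stabilizer_of_sub_subset [Finite G] (ht : t.Nonempty)
    (h : ((t - t : Finset G) : Set G) ⊆ stabilizer G s) : #t ≤ Nat.card (stabilizer G s) :=
  calc #t ≤ #(t - t) := card_le_card_sub_left ht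
    _ = ((t - t : Finset G) : Set G).ncard := (Set.ncard_coe_finset _).symm
    _ ≤ Nat.card (stabilizer G s) := Set.ncard_le_ncard h (Set.toFinite _)

lemma eq_univ_of_stabilizer_eq_top [Fintype G] (hs : s.Nonempty) (h : stabilizer G s = ⊤) :
    s = univ := by
  obtain ⟨a, ha⟩ := hs
  refine eq_univ_of_forall fun g ↦ ?_
  have hmem : g - a ∈ stabilizer G s := h ▸ AddSubgroup.mem_top _
  simpa using mem_stabilizer_finset'.1 hmem ha

variable [Fintype G] {m : ℕ}

theorem add_eq_univ_or_card_add_card_le (hm : ∀ H : AddSubgroup G, H ≠ ⊤ → Nat.card H ≤ m)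
    (hs : s.Nonempty) (ht : t.Nonempty) : s + t = univ ∨ #s + #t ≤ #(s + t) + m := by
  induction t using strongInductionOn generalizing s with
  | _ t ih =>
  by_cases hstuck : ∀ x ∈ s, ∀ y ∈ t, (x - y) +ᵥ t ⊆ s
  · have hsub := sub_subset_stabilizer_of_forall_vadd_subset hstuck
    by_cases htop : stabilizer G s = ⊤
    · obtain ⟨y, hy⟩ := ht
      rw [eq_univ_of_stabilizer_eq_top hs htop]
      exact .inl <| eq_univ_of_forall fun g ↦
        mem_add.2 ⟨g - y, mem_univ _, y, hy, sub_add_cancel g y⟩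
    · have htm : #t ≤ m := (card_le_card_stabilizer_of_sub_subset ht hsub).trans (hm _ htop)
      have hst : #s ≤ #(s + t) := card_le_card_add_right ht
      omega
  · push Not at hstuck
    obtain ⟨x, hx, y, hy, hxy⟩ := hstuck
    have hsub : (s ∪ ((x - y) +ᵥ t)) + (t ∩ (-(x - y) +ᵥ s)) ⊆ s + t :=
      addDysonETransform.subset (x - y) (s, t)
    have hcard : #(s ∪ ((x - y) +ᵥ t)) + #(t ∩ (-(x - y) +ᵥ s)) = #s + #t :=
      addDysonETransform.card (x - y) (s, t)
    have hy' : y ∈ t ∩ (-(x - y) +ᵥ s) :=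
      mem_inter.2 ⟨hy, mem_neg_vadd_finset_iff.2 (by simpa using hx)⟩
    have hlt : t ∩ (-(x - y) +ᵥ s) ⊂ t := by
      refine ssubset_of_subset_of_ne inter_subset_left fun heq ↦ hxy ?_
      intro z hz
      obtain ⟨b, hb, rfl⟩ := mem_vadd_finset.1 hz
      exact mem_neg_vadd_finset_iff.1 (inter_eq_left.1 heq hb)
    rcases ih _ hlt (hs.mono subset_union_left) ⟨y, hy'⟩ with h | h
    · exact .inl (eq_univ_of_forall fun g ↦ hsub (h ▸ mem_univ g))
    · have := card_le_card hsub
      omega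

end Finset

theorem Set.add_eq_univ_or_ncard_add_ncard_le {G : Type*} [AddCommGroup G] [Finite G] {m : ℕ}
    (hm : ∀ H : AddSubgroup G, H ≠ ⊤ → Nat.card H ≤ m) {X Y : Set G} (hX : X.Nonempty)
    (hY : Y.Nonempty) : X + Y = Set.univ ∨ X.ncard + Y.ncard ≤ (X + Y).ncard + m := by
  classical
  have := Fintype.ofFinite G
  lift X to Finset G using X.toFinite
  lift Y to Finset G using Y.toFinite
  simpa only [← Finset.coe_add, Set.ncard_coe_finset, Finset.coe_eq_univ] using
    Finset.add_eq_univ_or_card_add_card_le hm (Finset.coe_nonempty.1 hX)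
      (Finset.coe_nonempty.1 hY)

section sumset

variable {G : Type*}

lemma zero_mem_sumset [AddCommMonoid G] (A : Multiset G) : (0 : G) ∈ sumset A :=
  ⟨0, Multiset.zero_le A, rfl⟩

lemma sumset_add [AddCommMonoid G] (A B : Multiset G) :
    sumset (A + B) = sumset A + sumset B := by
  classical
  ext x
  constructor
  · rintro ⟨C, hC, rfl⟩
    refine Set.mem_add.2 ⟨(C ∩ A).sum, ⟨C ∩ A, Multiset.inter_le_right, rfl⟩,
      (C - A).sum, ⟨C - A, Multiset.sub_le_iff_le_add'.2 hC, rfl⟩, ?_⟩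
    rw [← Multiset.sum_add, add_comm, Multiset.sub_add_inter]
  · intro hx
    obtain ⟨_, ⟨C₁, h₁, rfl⟩, _, ⟨C₂, h₂, rfl⟩, rfl⟩ := Set.mem_add.1 hx
    exact ⟨C₁ + C₂, add_le_add h₁ h₂, Multiset.sum_add _ _⟩

theorem sumset_sum_eq_univ_or_sum_ncard_le {ι : Type*} [AddCommGroup G] [Finite G] {m : ℕ}
    (hm : ∀ H : AddSubgroup G, H ≠ ⊤ → Nat.card H ≤ m) (A : ι → Multiset G) {I : Finset ι}
    (hI : I.Nonempty) :
    sumset (∑ i ∈ I, A i) = Set.univ ∨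
      ∑ i ∈ I, (sumset (A i)).ncard ≤ (sumset (∑ i ∈ I, A i)).ncard + (#I - 1) * m := by
  induction hI using Finset.Nonempty.cons_induction with
  | singleton a => simp
  | cons a I ha hI ih =>
    rw [sum_cons, sum_cons, sumset_add, card_cons, Nat.add_sub_cancel]
    obtain ⟨k, hk⟩ := Nat.exists_eq_add_one_of_ne_zero hI.card_pos.ne'
    rw [hk] at ih ⊢
    rw [Nat.add_sub_cancel] at ih
    rcases ih with h | h
    · exact .inl (by rw [h, Set.add_univ ⟨0, zero_mem_sumset _⟩])
    rcases Set.add_eq_univ_or_ncard_add_ncard_le hm ⟨0, zero_mem_sumset (A a)⟩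
      ⟨0, zero_mem_sumset (∑ i ∈ I, A i)⟩ with h' | h'
    · exact .inl h'
    · right
      rw [add_one_mul]
      omega

end sumset

theorem stmt_2 {G : Type*} [AddCommGroup G] [Fintype G] (m : ℕ)
    (hm : IsGreatest {n : ℕ | ∃ H : AddSubgroup G, H ≠ ⊤ ∧ Nat.card H = n} m)
    (j : ℕ) (A : Fin j → Multiset G) :
    sumset (∑ i, A i) = Set.univ ∨
      (sumset (∑ i, A i)).ncard + (j - 1) * m ≥ ∑ i, (sumset (A i)).ncard := by
  rcases j.eq_zero_or_pos with rfl | hj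
  · simp
  simpa using sumset_sum_eq_univ_or_sum_ncard_le (fun H hH ↦ hm.2 ⟨H, hH, rfl⟩) A
    (univ_nonempty_iff.2 ⟨⟨0, hj⟩⟩)
end

section
/- Let p be a prime and let k be an integer with 2 ≤ k ≤ √(p/(2 log p + 1)) − 1. If A is a multiset in (Z/pZ)^2 \ {0} with |A| = p + k and #ΣA < (k+2)p, then there exists a nontrivial proper subgroup of (Z/pZ)^2 containing at least p elements of A counted with multiplicity. -/
open scoped Classical in
/-- The number of elements of the multiset A (with multiplicity) lying in the subgroup H. -/
noncomputable def inCount {G : Type*} [AddCommGroup G] (A : Multiset G) (H : AddSubgroup G) : ℕ :=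
  Multiset.card (A.filter (fun x => x ∈ H))

/-- A multiset in (Z/pZ)² is valid if 0 ∉ A and every nontrivial (cyclic) subgroup contains
fewer than p elements of A, counted with multiplicity. -/
def ValidMS (p : ℕ) (A : Multiset (ZMod p × ZMod p)) : Prop :=
  (0 : ZMod p × ZMod p) ∉ A ∧
    ∀ x : ZMod p × ZMod p, x ≠ 0 → inCount A (AddSubgroup.zmultiples x) < p

/-
Suppose no line contains `p` elements of `A`. If some line `L` contains `c` elements with
`k < c < p`, the Cauchy–Davenport theorem gives `c + 1` subset sums on `L` and `p + k - c + 1`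
classes modulo `L` among the subset sums of the other elements, hence
`#ΣA ≥ (c + 1) (p + k - c + 1) ≥ (k + 2) p`. Otherwise every line carries at most `k` elements.
Adding the elements of `A` one at a time, a new element `x` enlarges `ΣY` by at least the number
of classes of `ΣY` modulo `⟨x⟩` that are not full cosets, i.e. by at least
`min p (#Y - k + 2) - #ΣY / p`. If `#ΣA < (k + 2) p` these increments add up to
`#ΣA ≥ p² / 2 - O(k p)`, which contradicts `p ≥ 3 (k + 1)²`.
-/

open Finset AddSubgroup
open scoped Pointwise

namespace Multiset

variable {G H : Type*} [AddCommGroup G] [AddCommGroup H] [DecidableEq G] [DecidableEq H]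

def subsetSums (A : Multiset G) : Finset G := (A.powerset.map sum).toFinset

variable {A B : Multiset G} {x g : G}

theorem mem_subsetSums : g ∈ A.subsetSums ↔ ∃ B ≤ A, B.sum = g := by
  simp [subsetSums]

theorem coe_subsetSums (A : Multiset G) : (A.subsetSums : Set G) = sumset A := by
  ext; exact mem_subsetSums

theorem subsetSums_mono (h : A ≤ B) : A.subsetSums ⊆ B.subsetSums := fun _ hg ↦
  let ⟨C, hC, hCg⟩ := mem_subsetSums.1 hg
  mem_subsetSums.2 ⟨C, hC.trans h, hCg⟩

theorem subsetSums_zero : (0 : Multiset G).subsetSums = {0} := by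
  simp [subsetSums]

theorem subsetSums_cons : (x ::ₘ A).subsetSums = A.subsetSums ∪ (x +ᵥ A.subsetSums) := by
  simp only [subsetSums, powerset_cons, map_add, map_map, Function.comp_def, sum_cons,
    toFinset_add, vadd_finset_def, toFinset_map, image_image, vadd_eq_add]

theorem subsetSums_add_subsetSums_subset : A.subsetSums + B.subsetSums ⊆ (A + B).subsetSums := by
  intro g hg
  obtain ⟨a, ha, b, hb, rfl⟩ := Finset.mem_add.1 hg
  obtain ⟨C, hC, rfl⟩ := mem_subsetSums.1 ha
  obtain ⟨D, hD, rfl⟩ := mem_subsetSums.1 hb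
  exact mem_subsetSums.2 ⟨C + D, add_le_add hC hD, sum_add C D⟩

theorem image_subsetSums (f : G →+ H) (A : Multiset G) :
    A.subsetSums.image f = (A.map f).subsetSums := by
  induction A using Multiset.induction_on with
  | empty => simp [subsetSums_zero]
  | cons a A ih =>
    rw [map_cons, subsetSums_cons, subsetSums_cons, image_union, ← ih, vadd_finset_def,
      vadd_finset_def, image_image, image_image]
    congr 2
    ext; simp

theorem subsetSums_subset_addSubgroup {L : AddSubgroup G} (hA : ∀ a ∈ A, a ∈ L) :
    ∀ g ∈ A.subsetSums, g ∈ L := fun _ hg ↦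
  let ⟨_, hB, hBg⟩ := mem_subsetSums.1 hg
  hBg ▸ L.multiset_sum_mem _ fun a ha ↦ hA a (mem_of_le hB ha)

theorem min_le_card_subsetSums {n : ℕ} (hn : (n : ℕ∞) ≤ AddMonoid.minOrder G) (hA : 0 ∉ A) :
    min n (card A + 1) ≤ #A.subsetSums := by
  induction A using Multiset.induction_on with
  | empty => simp [subsetSums_zero]
  | cons a A ih =>
    have ha : a ≠ 0 := fun h ↦ hA (h ▸ mem_cons_self a A)
    replace ih := ih fun h ↦ hA (mem_cons_of_mem h)
    have hpair : ({0, a} : Finset G) + A.subsetSums = (a ::ₘ A).subsetSums := by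
      ext; simp [subsetSums_cons, Finset.mem_add, mem_vadd_finset, eq_comm]
    have hcd := cauchy_davenport_minOrder_add (s := {0, a}) (t := A.subsetSums)
      (insert_nonempty _ _) ⟨0, mem_subsetSums.2 ⟨0, zero_le _, sum_zero⟩⟩
    rw [hpair, Finset.card_pair ha.symm] at hcd
    have : min n (2 + #A.subsetSums - 1) ≤ #(a ::ₘ A).subsetSums := by
      have h := (min_le_min_right _ hn).trans hcd
      rwa [← Nat.mono_cast.map_min, Nat.cast_le] at h
    rw [card_cons]
    omega

end Multiset

section Fibres

variable {G H : Type*} [AddGroup G] [AddGroup H]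

theorem addOrderOf_le_card_of_forall_add_mem {s : Finset G} {x : G} (hs : s.Nonempty)
    (h : ∀ a ∈ s, x + a ∈ s) : addOrderOf x ≤ #s := by
  obtain ⟨a, ha⟩ := hs
  have hmem : ∀ n : ℕ, n • x + a ∈ s := fun n ↦ by
    induction n with
    | zero => simpa using ha
    | succ n ih => simpa only [succ_nsmul', add_assoc] using h _ ih
  exact le_card_of_inj_on_range (fun n ↦ n • x + a) (fun n _ ↦ hmem n)
    fun i hi j hj hij ↦ nsmul_injOn_Iio_addOrderOf hi hj (add_right_cancel hij)

variable [DecidableEq G] [DecidableEq H]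

/-- A fibre of `φ` over `T` that is not stable under `x ∈ ker φ` yields a new element of
`x +ᵥ T`; stable fibres contain a whole `x`-orbit, so there are at most `#T / addOrderOf x`
of them. -/
theorem card_image_le_card_vadd_sdiff_add_div (φ : G →+ H) {x : G} (hφx : φ x = 0)
    (hx : IsOfFinAddOrder x) (T : Finset G) :
    #(T.image φ) ≤ #((x +ᵥ T) \ T) + #T / addOrderOf x := by
  set fibre := fun v ↦ T.filter (φ · = v)
  set full := (T.image φ).filter (fun v ↦ addOrderOf x ≤ #(fibre v))
  set rest := (T.image φ).filter (fun v ↦ ¬ addOrderOf x ≤ #(fibre v))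
  have hfull : #full * addOrderOf x ≤ #T := by
    calc #full * addOrderOf x = ∑ v ∈ full, addOrderOf x := by rw [sum_const, smul_eq_mul]
      _ ≤ ∑ v ∈ full, #(fibre v) := sum_le_sum fun v hv ↦ (mem_filter.1 hv).2
      _ ≤ ∑ v ∈ T.image φ, #(fibre v) := sum_le_sum_of_subset (filter_subset _ _)
      _ = #T := (card_eq_sum_card_image φ T).symm
  have hrest : rest ⊆ ((x +ᵥ T) \ T).image φ := by
    intro v hv
    obtain ⟨hvT, hlt⟩ := mem_filter.1 hv
    obtain ⟨a, haT, rfl⟩ := mem_image.1 hvT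
    obtain ⟨b, hb, hxb⟩ : ∃ b ∈ fibre (φ a), x + b ∉ fibre (φ a) := by
      by_contra! h
      exact hlt (addOrderOf_le_card_of_forall_add_mem ⟨a, by simp [fibre, haT]⟩ h)
    obtain ⟨hbT, hba⟩ := mem_filter.1 hb
    refine mem_image.2 ⟨x + b, mem_sdiff.2 ⟨vadd_mem_vadd_finset hbT, fun h ↦ hxb ?_⟩, ?_⟩ <;>
      simp_all [fibre]
  have hsplit : #full + #rest = #(T.image φ) := card_filter_add_card_filter_not _
  have := (card_le_card hrest).trans card_image_le
  have := (Nat.le_div_iff_mul_le hx.addOrderOf_pos).2 hfull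
  omega

theorem card_image_mul_card_le_card_add (φ : G →+ H) (S : Finset G) {W : Finset G}
    (hW : ∀ w ∈ W, φ w = 0) : #(S.image φ) * #W ≤ #(S + W) := by
  calc #(S.image φ) * #W = ∑ v ∈ S.image φ, #W := by rw [sum_const, smul_eq_mul]
    _ ≤ ∑ v ∈ S.image φ, #((S + W).filter (φ · = v)) := sum_le_sum fun v hv ↦ by
        obtain ⟨s, hs, rfl⟩ := mem_image.1 hv
        rw [← card_vadd_finset s W]
        refine card_le_card fun g hg ↦ ?_
        obtain ⟨w, hw, rfl⟩ := mem_vadd_finset.1 hg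
        simp [hW w hw, add_mem_add hs hw]
    _ = #(S + W) := (card_eq_sum_card_fiberwise fun g hg ↦ by
        obtain ⟨s, hs, w, hw, rfl⟩ := mem_add.1 hg
        simpa [hW w hw] using mem_image_of_mem φ hs).symm

end Fibres

section InCount

open scoped Classical

variable {G : Type*} [AddCommGroup G] {A B : Multiset G} {L : AddSubgroup G}

theorem inCount_add_card_filter_not_mem (A : Multiset G) (L : AddSubgroup G) :
    inCount A L + Multiset.card (A.filter (· ∉ L)) = Multiset.card A := by
  rw [inCount, ← Multiset.card_add, Multiset.filter_add_not]

theorem inCount_mono (h : A ≤ B) : inCount A L ≤ inCount B L :=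
  Multiset.card_le_card (Multiset.filter_le_filter _ h)

theorem inCount_cons_of_mem {x : G} (hx : x ∈ L) : inCount (x ::ₘ A) L = inCount A L + 1 := by
  rw [inCount, Multiset.filter_cons_of_pos _ hx, Multiset.card_cons, inCount]

end InCount

section ExponentPrime

variable {p : ℕ} [Fact p.Prime] {G : Type*} [AddCommGroup G]

theorem le_minOrder_of_nsmul_eq_zero (hG : ∀ x : G, p • x = 0) : (p : ℕ∞) ≤ AddMonoid.minOrder G :=
  AddMonoid.le_minOrder.2 fun x hx _ ↦ mod_cast (addOrderOf_eq_prime (hG x) hx).ge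

variable [DecidableEq G]

theorem min_le_card_image_mk_subsetSums (hG : ∀ x : G, p • x = 0) (L : AddSubgroup G)
    [DecidableEq (G ⧸ L)] {B : Multiset G} (hB : ∀ b ∈ B, b ∉ L) :
    min p (Multiset.card B + 1) ≤ #(B.subsetSums.image (QuotientAddGroup.mk' L)) := by
  have hGL : ∀ y : G ⧸ L, p • y = 0 := fun y ↦ QuotientAddGroup.induction_on y fun x ↦ by
    rw [← QuotientAddGroup.mk_nsmul, hG, QuotientAddGroup.mk_zero]
  rw [Multiset.image_subsetSums]
  simpa using Multiset.min_le_card_subsetSums (le_minOrder_of_nsmul_eq_zero hGL) (A := B.map _) (by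
    simpa [QuotientAddGroup.eq_zero_iff] using hB)

theorem card_subsetSums_add_min_le (hG : ∀ x : G, p • x = 0) {x : G} (hx : x ≠ 0)
    (Y : Multiset G) :
    #Y.subsetSums + min p (Multiset.card Y - inCount Y (zmultiples x) + 1) ≤
      #(x ::ₘ Y).subsetSums + #Y.subsetSums / p := by
  have horder : addOrderOf x = p := addOrderOf_eq_prime (hG x) hx
  have hnew := card_image_le_card_vadd_sdiff_add_div (QuotientAddGroup.mk' (zmultiples x))
    ((QuotientAddGroup.eq_zero_iff x).2 (mem_zmultiples x))
    (addOrderOf_pos_iff.1 (horder ▸ (Fact.out : p.Prime).pos)) Y.subsetSums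
  have hoff := min_le_card_image_mk_subsetSums hG (zmultiples x)
    (B := Y.filter (· ∉ zmultiples x)) fun b hb ↦ (Multiset.mem_filter.1 hb).2
  have himage := card_le_card (image_subset_image (f := QuotientAddGroup.mk' (zmultiples x))
    (Multiset.subsetSums_mono (Multiset.filter_le (· ∉ zmultiples x) Y)))
  have hunion : #((x +ᵥ Y.subsetSums) \ Y.subsetSums) + #Y.subsetSums =
      #(x ::ₘ Y).subsetSums := by
    rw [Multiset.subsetSums_cons, union_comm, card_sdiff_add_card]
  have := inCount_add_card_filter_not_mem Y (zmultiples x)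
  rw [horder] at hnew
  omega

theorem add_two_mul_le_card_subsetSums_of_inCount (hG : ∀ x : G, p • x = 0) {k : ℕ}
    {A : Multiset G} (L : AddSubgroup G) (h0 : (0 : G) ∉ A) (hcard : Multiset.card A = p + k)
    (hlow : k + 1 ≤ inCount A L) (hhigh : inCount A L < p) :
    (k + 2) * p ≤ #A.subsetSums := by
  classical
  set c := inCount A L
  set inL := A.filter (· ∈ L)
  set offL := A.filter (· ∉ L)
  have hsplit : c + Multiset.card offL = p + k := hcard ▸ inCount_add_card_filter_not_mem A L
  have hin : c + 1 ≤ #inL.subsetSums := by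
    have := Multiset.min_le_card_subsetSums (le_minOrder_of_nsmul_eq_zero hG)
      fun h ↦ h0 (Multiset.mem_of_le (Multiset.filter_le (· ∈ L) A) h)
    exact (min_eq_right (by omega)).symm.trans_le this
  have hoff : Multiset.card offL + 1 ≤ #(offL.subsetSums.image (QuotientAddGroup.mk' L)) := by
    have := min_le_card_image_mk_subsetSums hG L (B := offL) fun b hb ↦
      (Multiset.mem_filter.1 hb).2
    exact (min_eq_right (by omega)).symm.trans_le this
  have hprod := card_image_mul_card_le_card_add (QuotientAddGroup.mk' L) offL.subsetSums
    (W := inL.subsetSums) fun w hw ↦ (QuotientAddGroup.eq_zero_iff w).2 <|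
      Multiset.subsetSums_subset_addSubgroup (fun a ha ↦ (Multiset.mem_filter.1 ha).2) w hw
  have hsub : offL.subsetSums + inL.subsetSums ⊆ A.subsetSums := by
    simpa only [add_comm offL, inL, offL, Multiset.filter_add_not] using
      Multiset.subsetSums_add_subsetSums_subset (A := offL) (B := inL)
  have := card_le_card hsub
  have := Nat.mul_le_mul hoff hin
  have : 0 ≤ ((c : ℤ) - (k + 1)) * (p - 1 - c) := mul_nonneg (by omega) (by omega)
  nlinarith

-- Each step adds at least `#Y + 1 - 2 k` new sums, and these increments sum to the bound.
theorem two_add_mul_le_two_mul_card_subsetSums (hG : ∀ x : G, p • x = 0) {k : ℕ}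
    {A : Multiset G} (h0 : (0 : G) ∉ A) (hlines : ∀ x ≠ 0, inCount A (zmultiples x) ≤ k)
    (hsmall : #A.subsetSums < (k + 2) * p) {X : Multiset G} (hXA : X ≤ A)
    (hX : Multiset.card X < p + k) :
    2 + (Multiset.card X : ℤ) * (Multiset.card X + 1 - 4 * k) ≤ 2 * #X.subsetSums := by
  induction X using Multiset.induction_on with
  | empty => simp [Multiset.subsetSums_zero]
  | cons x Y ih =>
    have hYA := (Multiset.le_cons_self Y x).trans hXA
    rw [Multiset.card_cons] at hX ⊢
    have ih := ih hYA (by omega)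
    have hx0 : x ≠ 0 := fun h ↦ h0 (h ▸ Multiset.mem_of_le hXA (Multiset.mem_cons_self x Y))
    have hgrow := card_subsetSums_add_min_le hG hx0 Y
    have hline : inCount Y (zmultiples x) + 1 ≤ k :=
      inCount_cons_of_mem (mem_zmultiples x) ▸ (inCount_mono hXA).trans (hlines x hx0)
    have hdiv : #Y.subsetSums / p ≤ k + 1 := Nat.lt_succ_iff.1 <|
      (Nat.div_lt_iff_lt_mul (Fact.out : p.Prime).pos).2 <|
        (card_le_card (Multiset.subsetSums_mono hYA)).trans_lt hsmall
    have := inCount_add_card_filter_not_mem Y (zmultiples x)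
    have hstep : (#Y.subsetSums : ℤ) + Multiset.card Y + 1 - 2 * k ≤ #(x ::ₘ Y).subsetSums := by
      omega
    push_cast
    linear_combination ih + 2 * hstep

theorem add_two_mul_le_card_subsetSums (hG : ∀ x : G, p • x = 0) {k : ℕ} {A : Multiset G}
    (h0 : (0 : G) ∉ A) (hcard : Multiset.card A = p + k)
    (hlines : ∀ x ≠ 0, inCount A (zmultiples x) < p) (hk : 1 ≤ k) (hp : 3 * (k + 1) ^ 2 ≤ p) :
    (k + 2) * p ≤ #A.subsetSums := by
  by_contra! hsmall
  by_cases hbig : ∃ x ≠ 0, k + 1 ≤ inCount A (zmultiples x)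
  · obtain ⟨x, hx, hkx⟩ := hbig
    exact hsmall.not_ge <|
      add_two_mul_le_card_subsetSums_of_inCount hG _ h0 hcard hkx (hlines x hx)
  push Not at hbig
  obtain ⟨a, ha⟩ := Multiset.card_pos_iff_exists_mem.1 (show 0 < Multiset.card A by omega)
  have hbound := two_add_mul_le_two_mul_card_subsetSums hG h0
    (fun x hx ↦ Nat.lt_succ_iff.1 (hbig x hx)) hsmall (Multiset.erase_le a A)
    (by rw [Multiset.card_erase_of_mem ha, hcard, Nat.pred_eq_sub_one]; omega)
  rw [Multiset.card_erase_of_mem ha, hcard, Nat.pred_eq_sub_one,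
    Nat.cast_sub (by omega)] at hbound
  push_cast at hbound
  have := card_le_card (Multiset.subsetSums_mono (Multiset.erase_le a A))
  have : ((p : ℤ) * p - (4 * k + 5) * p) ≥ 3 * k ^ 2 := by nlinarith
  nlinarith

end ExponentPrime

theorem three_mul_sq_le_of_le_sqrt_div {p k : ℕ} (hk : 1 ≤ k)
    (h : (k : ℝ) ≤ √(p / (2 * Real.log p + 1)) - 1) : 3 * (k + 1) ^ 2 ≤ p := by
  have hlog : 0 ≤ Real.log p := Real.log_natCast_nonneg p
  have hsq : ((k : ℝ) + 1) ^ 2 * (2 * Real.log p + 1) ≤ p := by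
    rw [← le_div_iff₀ (by positivity), ← Real.le_sqrt (by positivity) (by positivity)]
    linarith
  have hp4 : (4 : ℝ) ≤ p := by
    have : (2 : ℝ) ≤ k + 1 := by exact_mod_cast Nat.succ_le_succ hk
    nlinarith
  have hlog1 : 1 ≤ Real.log p := by
    rw [Real.le_log_iff_exp_le (by positivity)]
    linarith [Real.exp_one_lt_d9]
  have : (3 * (k + 1) ^ 2 : ℝ) ≤ p := by nlinarith
  exact_mod_cast this

theorem zmod_prod_nsmul_eq_zero {p : ℕ} (x : ZMod p × ZMod p) : p • x = 0 := by
  ext <;> simp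

theorem zmultiples_ne_top_zmod_prod {p : ℕ} [Fact p.Prime] (x : ZMod p × ZMod p) :
    zmultiples x ≠ ⊤ := by
  intro h
  have hp := (Fact.out : p.Prime).one_lt
  have hcard := congrArg (fun H : AddSubgroup (ZMod p × ZMod p) ↦ Nat.card H) h
  simp only [Nat.card_zmultiples, AddSubgroup.card_top, Nat.card_prod, Nat.card_zmod] at hcard
  have := Nat.le_of_dvd (by omega) (addOrderOf_dvd_of_nsmul_eq_zero (zmod_prod_nsmul_eq_zero x))
  nlinarith

theorem stmt_14 (p : ℕ) (hp : p.Prime) (k : ℕ) (hk2 : 2 ≤ k)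
    (hk : (k : ℝ) ≤ Real.sqrt ((p : ℝ) / (2 * Real.log p + 1)) - 1)
    (A : Multiset (ZMod p × ZMod p))
    (h0 : (0 : ZMod p × ZMod p) ∉ A)
    (hcard : Multiset.card A = p + k)
    (hsmall : (sumset A).ncard < (k + 2) * p) :
    ∃ H : AddSubgroup (ZMod p × ZMod p), H ≠ ⊥ ∧ H ≠ ⊤ ∧ inCount A H ≥ p := by
  have : Fact p.Prime := ⟨hp⟩
  by_contra! hlines
  have hbound := add_two_mul_le_card_subsetSums zmod_prod_nsmul_eq_zero h0 hcard
    (fun x hx ↦ hlines _ (zmultiples_eq_bot.not.2 hx) (zmultiples_ne_top_zmod_prod x)) (by omega)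
    (three_mul_sq_le_of_le_sqrt_div (by omega) hk)
  rw [← Multiset.coe_subsetSums, Set.ncard_coe_finset] at hsmall
  omega
end
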